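/- The space 𝓗 of triples of projective lines in ℝP³ with pairwise distinct intersection points is homotopy equivalent to the complete flag variety Flag(ℝ⁴), the subspace of Gr(1,ℝ⁴) × Gr(2,ℝ⁴) × Gr(3,ℝ⁴) consisting of triples (V₁,V₂,V₃) with V₁ ⊂ V₂ ⊂ V₃. -/

import Mathlib

open Module Matrix CategoryTheory

noncomputable section

/-- `ℝ^m` with its Euclidean topology and inner product. -/
abbrev Euc (m : ℕ) : Type := EuclideanSpace ℝ (Fin m)

/-- The Grassmannian `Gr(k, ℝ^m)` of `k`-dimensional linear subspaces of `ℝ^m`. -/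
def Gr (k m : ℕ) : Type :=
  { V : Submodule ℝ (Euc m) // finrank ℝ V = k }

/-- The standard topology on the Grassmannian, induced by sending a subspace to the
orthogonal projection onto it. -/
noncomputable instance (k m : ℕ) : TopologicalSpace (Gr k m) :=
  TopologicalSpace.induced
    (fun V : Gr k m =>
      (V.1.subtypeL.comp V.1.orthogonalProjectionOnto : Euc m →L[ℝ] Euc m))
    inferInstance

/-- The condition that a triple of projective lines (i.e. 2-dimensional subspaces) has
pairwise distinct intersection points: each pairwise intersection is 1-dimensional, and
the three intersections are pairwise distinct. -/
def GoodTriple {m : ℕ} (p : Gr 2 m × Gr 2 m × Gr 2 m) : Prop :=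
  finrank ℝ ↥(p.1.1 ⊓ p.2.1.1) = 1 ∧
  finrank ℝ ↥(p.1.1 ⊓ p.2.2.1) = 1 ∧
  finrank ℝ ↥(p.2.1.1 ⊓ p.2.2.1) = 1 ∧
  p.1.1 ⊓ p.2.1.1 ≠ p.1.1 ⊓ p.2.2.1 ∧
  p.1.1 ⊓ p.2.1.1 ≠ p.2.1.1 ⊓ p.2.2.1 ∧
  p.1.1 ⊓ p.2.2.1 ≠ p.2.1.1 ⊓ p.2.2.1

/-- The space of triples of projective lines in `ℝP^{m-1}` with pairwise distinct
intersection points, as a subspace of `Gr(2,ℝ^m)³`. -/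
def Triples (m : ℕ) : Type :=
  { p : Gr 2 m × Gr 2 m × Gr 2 m // GoodTriple p }

instance (m : ℕ) : TopologicalSpace (Triples m) :=
  inferInstanceAs (TopologicalSpace { p : Gr 2 m × Gr 2 m × Gr 2 m // GoodTriple p })

/-- The (partial) flag variety of flags of signature `(0,1,2,3,m)` in `ℝ^m`;
for `m = 4` this is the complete flag variety `Flag(ℝ⁴)`. -/
def Flag123 (m : ℕ) : Type :=
  { v : Gr 1 m × Gr 2 m × Gr 3 m // v.1.1 ≤ v.2.1.1 ∧ v.2.1.1 ≤ v.2.2.1 }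

instance (m : ℕ) : TopologicalSpace (Flag123 m) :=
  inferInstanceAs (TopologicalSpace
    { v : Gr 1 m × Gr 2 m × Gr 3 m // v.1.1 ≤ v.2.1.1 ∧ v.2.1.1 ≤ v.2.2.1 })

/-- The complete flag variety `Flag(ℝ³)`. -/
def FlagR3 : Type := { v : Gr 1 3 × Gr 2 3 // v.1.1 ≤ v.2.1 }

instance : TopologicalSpace FlagR3 :=
  inferInstanceAs (TopologicalSpace { v : Gr 1 3 × Gr 2 3 // v.1.1 ≤ v.2.1 })

/-- The kernel of the linear functional `rᵢ(A) : ℝ^m → ℝ`, `x ↦ ∑ⱼ A i j * x j`,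
given by the `i`-th row of `A`. -/
def rowKer {m : ℕ} (A : Matrix (Fin m) (Fin m) ℝ) (i : Fin m) : Submodule ℝ (Euc m) :=
  LinearMap.ker ((∑ j : Fin m, A i j • (EuclideanSpace.proj j : Euc m →L[ℝ] ℝ) :
    Euc m →L[ℝ] ℝ) : Euc m →ₗ[ℝ] ℝ)

/-- The span of the first `k` columns of a matrix `A`, as a subspace of `ℝ^m`. -/
def colSpan {m : ℕ} (A : Matrix (Fin m) (Fin m) ℝ) (k : ℕ) : Submodule ℝ (Euc m) :=
  Submodule.span ℝ
    ((fun j : Fin m => (EuclideanSpace.equiv (Fin m) ℝ).symm (fun i => A i j)) ''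
      { j : Fin m | (j : ℕ) < k })

/-- The product of diagonal matrices is diagonal. -/
theorem isDiag_mul' {n : ℕ} {A B : Matrix (Fin n) (Fin n) ℝ}
    (hA : A.IsDiag) (hB : B.IsDiag) : (A * B).IsDiag := by
  intro i j hij
  rw [Matrix.mul_apply]
  refine Finset.sum_eq_zero fun k _ => ?_
  rcases eq_or_ne i k with rfl | hk
  · rw [hB hij, mul_zero]
  · rw [hA hk, zero_mul]

/-- The subgroup `T` of `GL(n,ℝ)` consisting of invertible diagonal matrices. -/
def diagGL (n : ℕ) : Subgroup (Matrix.GeneralLinearGroup (Fin n) ℝ) where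
  carrier := { A | (A : Matrix (Fin n) (Fin n) ℝ).IsDiag }
  one_mem' := Matrix.isDiag_one
  mul_mem' := fun ha hb => isDiag_mul' ha hb
  inv_mem' := by
    intro A hA
    show ((A⁻¹ : Matrix.GeneralLinearGroup (Fin n) ℝ) : Matrix (Fin n) (Fin n) ℝ).IsDiag
    rw [Matrix.coe_units_inv, ← Matrix.IsDiag.diagonal_diag hA, Matrix.inv_diagonal]
    exact Matrix.isDiag_diagonal _

/-- The orthogonal group `O(n)` of `n × n` real orthogonal matrices. -/
abbrev Orth (n : ℕ) := Matrix.orthogonalGroup (Fin n) ℝ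

/-- The subgroup `T ∩ O(n)` of diagonal orthogonal matrices (diagonal entries `±1`). -/
def diagOrth (n : ℕ) : Subgroup ↥(Orth n) where
  carrier := { A | (A : Matrix (Fin n) (Fin n) ℝ).IsDiag }
  one_mem' := Matrix.isDiag_one
  mul_mem' := fun ha hb => isDiag_mul' ha hb
  inv_mem' := by
    intro A hA
    show ((A⁻¹ : ↥(Orth n)) : Matrix (Fin n) (Fin n) ℝ).IsDiag
    rw [Matrix.UnitaryGroup.inv_val, Matrix.star_eq_conjTranspose]
    exact hA.conjTranspose

/-- `SO(n)`, as the subgroup of `O(n)` of matrices of determinant `1`. -/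
def SOsub (n : ℕ) : Subgroup ↥(Orth n) where
  carrier := { A | (A : Matrix (Fin n) (Fin n) ℝ).det = 1 }
  one_mem' := by simp
  mul_mem' := by
    intro a b ha hb
    show ((a * b : ↥(Orth n)) : Matrix (Fin n) (Fin n) ℝ).det = 1
    rw [Matrix.UnitaryGroup.mul_val, Matrix.det_mul, ha, hb, mul_one]
  inv_mem' := by
    intro A hA
    show ((A⁻¹ : ↥(Orth n)) : Matrix (Fin n) (Fin n) ℝ).det = 1
    rw [Matrix.UnitaryGroup.inv_val, Matrix.star_eq_conjTranspose, Matrix.det_conjTranspose]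
    simpa using congrArg star hA

/-- The group `SO(n)` of `n × n` real orthogonal matrices of determinant `1`. -/
abbrev SO (n : ℕ) := ↥(SOsub n)

/-- The underlying matrix of an element of `SO(n)`. -/
def soMat {n : ℕ} (A : SO n) : Matrix (Fin n) (Fin n) ℝ :=
  ((A : ↥(Orth n)) : Matrix (Fin n) (Fin n) ℝ)

/-- The subgroup `Kₙ` of `SO(n)` of diagonal matrices
(entries `±1`, determinant `1`). -/
def Kdiag (n : ℕ) : Subgroup (SO n) where
  carrier := { A | (soMat A).IsDiag }
  one_mem' := Matrix.isDiag_one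
  mul_mem' := fun ha hb => isDiag_mul' ha hb
  inv_mem' := by
    intro A hA
    show (soMat A⁻¹).IsDiag
    have h : soMat A⁻¹ = star (soMat A) := rfl
    rw [h, Matrix.star_eq_conjTranspose]
    exact hA.conjTranspose

/-- The Borel subgroup `Bₙ` of `GL(n,ℝ)` of invertible upper-triangular matrices. -/
def upperB (n : ℕ) : Subgroup (Matrix.GeneralLinearGroup (Fin n) ℝ) where
  carrier := { A | (A : Matrix (Fin n) (Fin n) ℝ).BlockTriangular id }
  one_mem' := Matrix.blockTriangular_one
  mul_mem' := fun ha hb => ha.mul hb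
  inv_mem' := by
    intro A hA
    show ((A⁻¹ : Matrix.GeneralLinearGroup (Fin n) ℝ) :
      Matrix (Fin n) (Fin n) ℝ).BlockTriangular id
    rw [Matrix.coe_units_inv]
    haveI := A.invertible
    exact Matrix.blockTriangular_inv_of_blockTriangular hA

/-- The singular chain complex of a topological space: the free simplicial abelian group
on the singular simplicial set, made into a chain complex via alternating face maps. -/
def singularChainComplex (X : Type) [TopologicalSpace X] : ChainComplex AddCommGrpCat ℕ :=
  (AlgebraicTopology.alternatingFaceMapComplex AddCommGrpCat).obj
    (((CategoryTheory.SimplicialObject.whiskering _ _).obj AddCommGrpCat.free).obj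
      (TopCat.toSSet.obj (TopCat.of X)))

/-- The `k`-th integral singular homology group of a topological space. -/
def singularHomology (X : Type) [TopologicalSpace X] (k : ℕ) : AddCommGrpCat :=
  (singularChainComplex X).homology k

/-!
The map `𝓗 → Flag(ℝ⁴)` sends `(ℓ₁, ℓ₂, ℓ₃)` to `(ℓ₁ ∩ ℓ₂, ℓ₁, ℓ₁ + ℓ₃)`: three lines meeting
pairwise in distinct points are coplanar and not concurrent, so `ℓ₁ + ℓ₃` is 3-dimensional and
contains `ℓ₂`. Conversely, writing `B ⊖ A = Aᗮ ⊓ B`, a flag `(V₁, V₂, V₃)` goes to the triple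
`(V₂, V₃ ⊖ (V₂ ⊖ V₁), V₃ ⊖ V₁)` of planes of `V₃` with trivial common intersection, and this is a
section of the first map. The other composite is homotopic to the identity: with `P = ℓ₁ ∩ ℓ₂`
fixed, squeeze `ℓ₂` along the line `ℓ₁ ⊖ P` and `ℓ₃` along `P` by the operators `1 - t • π`
(`π` an orthogonal projection); for every `t` the three planes stay inside `ℓ₁ + ℓ₃` and stay
non-concurrent, and at `t = 1` they are the section applied to `(P, ℓ₁, ℓ₁ + ℓ₃)`.

All maps are continuous for the topology of orthogonal projections because the projection onto
the span of a continuous family of vectors of constant rank depends continuously on the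
parameter: near any point, a subfamily that is a basis there stays linearly independent, hence
still spans, and Gram–Schmidt turns it into a continuous orthonormal basis.
-/

open Submodule Set InnerProductSpace Topology

section StarProjectionContinuity

variable {X : Type*} [TopologicalSpace X] {𝕜 E : Type*} [RCLike 𝕜] [NormedAddCommGroup E]
  [InnerProductSpace 𝕜 E]

theorem continuousOn_gramSchmidt {ι : Type*} [LinearOrder ι] [LocallyFiniteOrderBot ι]
    [WellFoundedLT ι] {v : X → ι → E} {U : Set X} (hv : ∀ i, ContinuousOn (fun x => v x i) U)
    (hli : ∀ x ∈ U, LinearIndependent 𝕜 (v x)) (i : ι) :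
    ContinuousOn (fun x => gramSchmidt 𝕜 (v x) i) U := by
  induction i using WellFoundedLT.induction with
  | _ i ih =>
    have hdef : ∀ x, gramSchmidt 𝕜 (v x) i = v x i - ∑ j ∈ Finset.Iio i,
        (inner 𝕜 (gramSchmidt 𝕜 (v x) j) (v x i) / (‖gramSchmidt 𝕜 (v x) j‖ : 𝕜) ^ 2) •
          gramSchmidt 𝕜 (v x) j := fun x =>
      eq_sub_of_add_eq (gramSchmidt_def'' 𝕜 (v x) i).symm
    simp only [hdef]
    refine (hv i).sub (continuousOn_finsetSum _ fun j hj => ?_)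
    have hj := ih j (Finset.mem_Iio.1 hj)
    refine ((hj.inner (hv i)).div ((RCLike.continuous_ofReal.comp_continuousOn hj.norm).pow 2)
      fun x hx => ?_).smul hj
    simpa using gramSchmidt_ne_zero j (hli x hx)

theorem continuousOn_gramSchmidtNormed {ι : Type*} [LinearOrder ι] [LocallyFiniteOrderBot ι]
    [WellFoundedLT ι] {v : X → ι → E} {U : Set X} (hv : ∀ i, ContinuousOn (fun x => v x i) U)
    (hli : ∀ x ∈ U, LinearIndependent 𝕜 (v x)) (i : ι) :
    ContinuousOn (fun x => gramSchmidtNormed 𝕜 (v x) i) U := by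
  have hgs := continuousOn_gramSchmidt hv hli i
  refine ((RCLike.continuous_ofReal.comp_continuousOn hgs.norm).inv₀ fun x hx => ?_).smul hgs
  simpa using gramSchmidt_ne_zero i (hli x hx)

theorem span_range_starProjection_basis {ι : Type*} (b : Module.Basis ι 𝕜 E)
    (K : Submodule 𝕜 E) [K.HasOrthogonalProjection] :
    span 𝕜 (range fun i => K.starProjection (b i)) = K := by
  rw [range_comp' K.starProjection b, ← ContinuousLinearMap.coe_coe, ← map_span, b.span_eq,
    Submodule.map_top]
  exact range_starProjection K

variable [FiniteDimensional 𝕜 E]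

theorem Orthonormal.starProjection_span_range {ι : Type*} [Fintype ι] {e : ι → E}
    (he : Orthonormal 𝕜 e) :
    (span 𝕜 (range e)).starProjection = ∑ i, rankOne 𝕜 (e i) (e i) := by
  classical
  have h := (OrthonormalBasis.span he Finset.univ).starProjection_eq_sum_rankOne
  simp only [OrthonormalBasis.span_apply, Finset.coe_image, Finset.coe_univ, image_univ] at h
  rw [h, Finset.sum_coe_sort Finset.univ (fun i => rankOne 𝕜 (e i) (e i))]

theorem continuousOn_starProjection_span_of_linearIndependent {n : ℕ} {v : X → Fin n → E}
    {U : Set X} (hv : ∀ i, ContinuousOn (fun x => v x i) U)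
    (hli : ∀ x ∈ U, LinearIndependent 𝕜 (v x)) :
    ContinuousOn (fun x => (span 𝕜 (range (v x))).starProjection) U := by
  have heq : ∀ x ∈ U, (span 𝕜 (range (v x))).starProjection =
      ∑ i, rankOne 𝕜 (gramSchmidtNormed 𝕜 (v x) i) (gramSchmidtNormed 𝕜 (v x) i) := by
    intro x hx
    rw [← span_gramSchmidt 𝕜, ← span_gramSchmidtNormed_range,
      (gramSchmidtNormed_orthonormal (hli x hx)).starProjection_span_range]
  refine ContinuousOn.congr (f := fun x =>
      ∑ i, rankOne 𝕜 (gramSchmidtNormed 𝕜 (v x) i) (gramSchmidtNormed 𝕜 (v x) i))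
    (continuousOn_finsetSum _ fun i _ => ?_) heq
  have hi := continuousOn_gramSchmidtNormed hv hli i
  simp only [rankOne_def]
  exact (ContinuousLinearMap.smulRightL 𝕜 E E).continuous₂.comp_continuousOn
    (((innerSL 𝕜).continuous.comp_continuousOn hi).prodMk hi)

theorem continuous_starProjection_span {ι : Type*} [Finite ι] {v : X → ι → E}
    (hv : ∀ i, Continuous fun x => v x i) {r : ℕ}
    (hr : ∀ x, finrank 𝕜 (span 𝕜 (range (v x))) = r) :
    Continuous fun x => (span 𝕜 (range (v x))).starProjection := by
  refine continuous_iff_continuousAt.2 fun x₀ => ?_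
  obtain ⟨κ, a, ha, hspan, hli⟩ := exists_linearIndependent' 𝕜 (v x₀)
  have : Finite κ := Finite.of_injective a ha
  obtain ⟨n, ⟨e⟩⟩ := Finite.exists_equiv_fin κ
  set w : X → Fin n → E := fun x => v x ∘ a ∘ e.symm
  have hw : ∀ j, Continuous fun x => w x j := fun j => hv _
  have hw₀ : LinearIndependent 𝕜 (w x₀) := hli.comp _ e.symm.injective
  have hn : n = r := by
    rw [← hr x₀, ← hspan, ← e.symm.surjective.range_comp]
    exact ((finrank_span_eq_card hw₀).trans (Fintype.card_fin n)).symm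
  have hU : ∀ᶠ x in 𝓝 x₀, LinearIndependent 𝕜 (w x) :=
    (continuous_pi hw).continuousAt.eventually hw₀.eventually
  refine ContinuousAt.congr (f := fun x => (span 𝕜 (range (w x))).starProjection) ?_
    (hU.mono fun x hx => ?_)
  · exact (continuousOn_starProjection_span_of_linearIndependent (fun j => (hw j).continuousOn)
      fun x hx => hx).continuousAt hU
  · have hle : span 𝕜 (range (w x)) ≤ span 𝕜 (range (v x)) :=
      span_mono (range_comp_subset_range _ _)
    dsimp only
    rw [eq_of_le_of_finrank_eq hle (by rw [finrank_span_eq_card hx, Fintype.card_fin, hr, hn])]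

theorem continuous_starProjection_map {K : X → Submodule 𝕜 E} {T : X → E →L[𝕜] E}
    (hK : Continuous fun x => (K x).starProjection) (hT : Continuous T) {r : ℕ}
    (hr : ∀ x, finrank 𝕜 ((K x).map (T x : E →ₗ[𝕜] E)) = r) :
    Continuous fun x => ((K x).map (T x : E →ₗ[𝕜] E)).starProjection := by
  have hspan : ∀ x, (K x).map (T x : E →ₗ[𝕜] E) =
      span 𝕜 (range fun i => T x ((K x).starProjection (Module.finBasis 𝕜 E i))) := by
    intro x
    rw [range_comp' (T x), ← ContinuousLinearMap.coe_coe, ← map_span,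
      span_range_starProjection_basis]
  simp only [hspan]
  exact continuous_starProjection_span (fun i => hT.clm_apply (hK.clm_apply continuous_const))
    fun x => hspan x ▸ hr x

theorem continuous_starProjection_sup {K L : X → Submodule 𝕜 E}
    (hK : Continuous fun x => (K x).starProjection)
    (hL : Continuous fun x => (L x).starProjection) {r : ℕ}
    (hr : ∀ x, finrank 𝕜 ↥(K x ⊔ L x) = r) :
    Continuous fun x => (K x ⊔ L x).starProjection := by
  have hspan : ∀ x, K x ⊔ L x = span 𝕜 (range (Sum.elim
      (fun i => (K x).starProjection (Module.finBasis 𝕜 E i))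
      (fun i => (L x).starProjection (Module.finBasis 𝕜 E i)))) := by
    intro x
    rw [Sum.elim_range, span_union, span_range_starProjection_basis,
      span_range_starProjection_basis]
  simp only [hspan]
  refine continuous_starProjection_span (fun i => ?_) fun x => hspan x ▸ hr x
  cases i with
  | inl i => exact hK.clm_apply continuous_const
  | inr i => exact hL.clm_apply continuous_const

theorem continuous_starProjection_inf {K L : X → Submodule 𝕜 E}
    (hK : Continuous fun x => (K x).starProjection)
    (hL : Continuous fun x => (L x).starProjection) {r : ℕ}
    (hr : ∀ x, finrank 𝕜 ↥(K x ⊓ L x) = r) :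
    Continuous fun x => (K x ⊓ L x).starProjection := by
  have hcompl : ∀ x, K x ⊓ L x = ((K x)ᗮ ⊔ (L x)ᗮ)ᗮ := fun x => by
    rw [← inf_orthogonal, orthogonal_orthogonal, orthogonal_orthogonal]
  have hperp : ∀ M : X → Submodule 𝕜 E, Continuous (fun x => (M x).starProjection) →
      Continuous fun x => (M x)ᗮ.starProjection := fun M hM => by
    simpa only [starProjection_orthogonal'] using continuous_const.fun_sub hM
  simp only [hcompl]
  refine hperp _ (continuous_starProjection_sup (hperp K hK) (hperp L hL) (r := finrank 𝕜 E - r)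
    fun x => ?_)
  have := finrank_add_finrank_orthogonal ((K x)ᗮ ⊔ (L x)ᗮ)
  rw [← hcompl, hr x] at this
  omega

end StarProjectionContinuity

namespace Gr

variable {X : Type*} [TopologicalSpace X] {k m : ℕ}

theorem continuous_starProjection : Continuous fun V : Gr k m => V.1.starProjection :=
  continuous_induced_dom

theorem continuous_iff {f : X → Gr k m} :
    Continuous f ↔ Continuous fun x => (f x).1.starProjection :=
  continuous_induced_rng

end Gr

section Incidence

variable {K V : Type*} [DivisionRing K] [AddCommGroup V] [Module K V] [FiniteDimensional K V]
  {A B C W : Submodule K V} {n : ℕ}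

theorem eq_of_finrank_inf_eq (hA : finrank K ↥(A ⊓ B) = finrank K A)
    (hB : finrank K ↥(A ⊓ B) = finrank K B) : A = B :=
  (eq_of_le_of_finrank_eq inf_le_left hA).symm.trans (eq_of_le_of_finrank_eq inf_le_right hB)

theorem inf_eq_bot_of_finrank_eq_one (hA : finrank K A = 1) (hB : finrank K B = 1)
    (hAB : A ≠ B) : A ⊓ B = ⊥ := by
  by_contra h
  have h1 : finrank K ↥(A ⊓ B) = 1 :=
    le_antisymm (hA ▸ finrank_mono inf_le_left) (one_le_finrank_iff.2 h)
  exact hAB (eq_of_finrank_inf_eq (h1.trans hA.symm) (h1.trans hB.symm))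

theorem le_finrank_inf_of_le (hA : finrank K A = n + 1) (hB : finrank K B = n + 1)
    (hW : finrank K W = n + 2) (hAW : A ≤ W) (hBW : B ≤ W) : n ≤ finrank K ↥(A ⊓ B) := by
  have := finrank_sup_add_finrank_inf_eq A B
  have := hW ▸ finrank_mono (sup_le hAW hBW)
  omega

theorem finrank_inf_of_le_of_ne (hA : finrank K A = n + 1) (hB : finrank K B = n + 1)
    (hW : finrank K W = n + 2) (hAW : A ≤ W) (hBW : B ≤ W) (hAB : A ≠ B) :
    finrank K ↥(A ⊓ B) = n := by
  have h₁ := le_finrank_inf_of_le hA hB hW hAW hBW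
  have h₂ : finrank K ↥(A ⊓ B) ≤ n + 1 := hA ▸ finrank_mono inf_le_left
  by_contra hne
  have h : finrank K ↥(A ⊓ B) = n + 1 := by omega
  exact hAB (eq_of_finrank_inf_eq (h.trans hA.symm) (h.trans hB.symm))

theorem not_inf_le_of_inf_inf_eq_bot (hA : finrank K A = n + 2) (hB : finrank K B = n + 2)
    (hW : finrank K W = n + 3) (hAW : A ≤ W) (hBW : B ≤ W) (h : A ⊓ B ⊓ C = ⊥) :
    ¬ A ⊓ B ≤ C := fun hle => by
  have := le_finrank_inf_of_le hA hB hW hAW hBW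
  rw [← inf_eq_left.2 hle, h, finrank_bot] at this
  omega

end Incidence

section RelativeOrthogonal

variable {𝕜 E : Type*} [RCLike 𝕜] [NormedAddCommGroup E] [InnerProductSpace 𝕜 E]

theorem disjoint_orthogonal_inf_inf_left (A B : Submodule 𝕜 E) : Disjoint B ((A ⊓ B)ᗮ ⊓ A) :=
  disjoint_iff.2 <| eq_bot_iff.2 fun _ ⟨hB, hperp, hA⟩ =>
    (inf_orthogonal_eq_bot (A ⊓ B)).le ⟨⟨hA, hB⟩, hperp⟩

variable [FiniteDimensional 𝕜 E] {A B : Submodule 𝕜 E}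

theorem starProjection_orthogonal_inf_of_le (h : A ≤ B) :
    (Aᗮ ⊓ B).starProjection = B.starProjection - A.starProjection := by
  ext x
  refine eq_starProjection_of_mem_orthogonal ⟨?_, ?_⟩ ?_
  · have := sub_mem (sub_starProjection_mem_orthogonal (K := A) x)
      (orthogonal_le h (sub_starProjection_mem_orthogonal (K := B) x))
    simpa using this
  · exact sub_mem (B.starProjection_apply_mem x) (h (A.starProjection_apply_mem x))
  · have := add_mem (orthogonal_le inf_le_right (sub_starProjection_mem_orthogonal (K := B) x))
      (orthogonal_le inf_le_left (le_orthogonal_orthogonal A (A.starProjection_apply_mem x)))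
    simpa [sub_sub_eq_add_sub, sub_add] using this

theorem finrank_orthogonal_inf_of_le (h : A ≤ B) :
    finrank 𝕜 ↥(Aᗮ ⊓ B) = finrank 𝕜 B - finrank 𝕜 A := by
  have := finrank_add_inf_finrank_orthogonal h
  omega

theorem orthogonal_inf_orthogonal_inf_of_le (h : A ≤ B) : (Aᗮ ⊓ B)ᗮ ⊓ B = A := by
  refine (eq_of_le_of_finrank_eq (le_inf ?_ h) ?_).symm
  · exact (orthogonal_le inf_le_left).trans' (le_orthogonal_orthogonal A)
  · rw [finrank_orthogonal_inf_of_le inf_le_right, finrank_orthogonal_inf_of_le h]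
    have := finrank_mono h
    omega

end RelativeOrthogonal

section ShrinkAlong

variable {𝕜 E : Type*} [RCLike 𝕜] [NormedAddCommGroup E] [InnerProductSpace 𝕜 E]
  [FiniteDimensional 𝕜 E]

def shrinkAlong (D : Submodule 𝕜 E) (t : 𝕜) : E →L[𝕜] E :=
  1 - t • D.starProjection

theorem Continuous.shrinkAlong {X : Type*} [TopologicalSpace X] {D : X → Submodule 𝕜 E}
    {t : X → 𝕜} (hD : Continuous fun x => (D x).starProjection) (ht : Continuous t) :
    Continuous fun x => _root_.shrinkAlong (D x) (t x) :=
  continuous_const.sub (ht.smul hD)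

variable {D K L W : Submodule 𝕜 E} {t : 𝕜}

theorem shrinkAlong_zero : shrinkAlong D 0 = 1 := by
  simp [shrinkAlong]

theorem shrinkAlong_one : shrinkAlong D 1 = Dᗮ.starProjection := by
  simp [shrinkAlong, starProjection_orthogonal']

theorem sub_shrinkAlong_mem (x : E) : x - shrinkAlong D t x ∈ D := by
  simpa [shrinkAlong] using D.smul_mem t (D.starProjection_apply_mem x)

theorem shrinkAlong_apply_of_mem_orthogonal {x : E} (hx : x ∈ Dᗮ) : shrinkAlong D t x = x := by
  simp [shrinkAlong, (starProjection_apply_eq_zero_iff D).2 hx]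

theorem map_shrinkAlong_of_le_orthogonal (hK : K ≤ Dᗮ) :
    K.map (shrinkAlong D t : E →ₗ[𝕜] E) = K := by
  ext x
  refine ⟨?_, fun hx => ⟨x, hx, shrinkAlong_apply_of_mem_orthogonal (hK hx)⟩⟩
  rintro ⟨y, hy, rfl⟩
  simpa [shrinkAlong_apply_of_mem_orthogonal (hK hy)] using hy

theorem map_shrinkAlong_le (hK : K ≤ W) (hD : D ≤ W) :
    K.map (shrinkAlong D t : E →ₗ[𝕜] E) ≤ W := by
  rintro _ ⟨y, hy, rfl⟩
  simpa using sub_mem (hK hy) (hD (sub_shrinkAlong_mem (t := t) y))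

theorem inf_map_shrinkAlong_le (hD : D ≤ L) :
    L ⊓ K.map (shrinkAlong D t : E →ₗ[𝕜] E) ≤ (L ⊓ K).map (shrinkAlong D t : E →ₗ[𝕜] E) := by
  rintro _ ⟨hx, y, hy, rfl⟩
  refine ⟨y, ⟨?_, hy⟩, rfl⟩
  simpa using add_mem hx (hD (sub_shrinkAlong_mem (t := t) y))

theorem finrank_map_shrinkAlong (h : Disjoint K D) :
    finrank 𝕜 ↥(K.map (shrinkAlong D t : E →ₗ[𝕜] E)) = finrank 𝕜 K := by
  rw [← LinearMap.range_domRestrict]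
  refine LinearMap.finrank_range_of_inj (LinearMap.injective_domRestrict_iff.2 ?_)
  refine disjoint_def.2 fun x hxK hx0 => disjoint_def.1 h x hxK ?_
  simpa [show shrinkAlong D t x = 0 from hx0] using sub_shrinkAlong_mem (D := D) (t := t) x

theorem map_shrinkAlong_one (hK : K ≤ W) (hD : D ≤ W) (h : Disjoint K D)
    (hdim : finrank 𝕜 K + finrank 𝕜 D = finrank 𝕜 W) :
    K.map (shrinkAlong D 1 : E →ₗ[𝕜] E) = Dᗮ ⊓ W := by
  refine eq_of_le_of_finrank_eq (le_inf ?_ (map_shrinkAlong_le hK hD)) ?_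
  · rintro _ ⟨y, -, rfl⟩
    simp [shrinkAlong_one]
  · rw [finrank_map_shrinkAlong h, finrank_orthogonal_inf_of_le hD]
    omega

theorem inf_map_shrinkAlong_inf_map_shrinkAlong_eq_bot {l₁ l₂ l₃ : Submodule 𝕜 E}
    (h : l₁ ⊓ l₂ ⊓ l₃ = ⊥) (t : 𝕜) :
    l₁ ⊓ l₂.map (shrinkAlong ((l₁ ⊓ l₂)ᗮ ⊓ l₁) t : E →ₗ[𝕜] E) ⊓
      l₃.map (shrinkAlong (l₁ ⊓ l₂) t : E →ₗ[𝕜] E) = ⊥ := by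
  have hP : l₁ ⊓ l₂ ≤ ((l₁ ⊓ l₂)ᗮ ⊓ l₁)ᗮ :=
    (orthogonal_le inf_le_left).trans' (le_orthogonal_orthogonal _)
  have h₁₂ : l₁ ⊓ l₂.map (shrinkAlong ((l₁ ⊓ l₂)ᗮ ⊓ l₁) t : E →ₗ[𝕜] E) ≤ l₁ ⊓ l₂ :=
    (inf_map_shrinkAlong_le inf_le_right).trans (map_shrinkAlong_of_le_orthogonal hP).le
  refine le_bot_iff.1 ((inf_le_inf_right _ h₁₂).trans ((inf_map_shrinkAlong_le le_rfl).trans ?_))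
  rw [h, Submodule.map_bot]

end ShrinkAlong

namespace GoodTriple

variable {m : ℕ} {p : Gr 2 m × Gr 2 m × Gr 2 m}

theorem of_le {W : Submodule ℝ (Euc m)} (hW : finrank ℝ W = 3) (h₁ : p.1.1 ≤ W)
    (h₂ : p.2.1.1 ≤ W) (h₃ : p.2.2.1 ≤ W) (h : p.1.1 ⊓ p.2.1.1 ⊓ p.2.2.1 = ⊥) :
    GoodTriple p := by
  obtain ⟨⟨l₁, d₁⟩, ⟨l₂, d₂⟩, ⟨l₃, d₃⟩⟩ := p
  dsimp only at h₁ h₂ h₃ h ⊢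
  have n₁₂ : ¬ l₁ ⊓ l₂ ≤ l₃ := not_inf_le_of_inf_inf_eq_bot d₁ d₂ hW h₁ h₂ h
  have n₁₃ : ¬ l₁ ⊓ l₃ ≤ l₂ :=
    not_inf_le_of_inf_inf_eq_bot d₁ d₃ hW h₁ h₃ (by rwa [inf_right_comm])
  refine ⟨finrank_inf_of_le_of_ne d₁ d₂ hW h₁ h₂ fun e => n₁₃ (inf_le_left.trans e.le),
    finrank_inf_of_le_of_ne d₁ d₃ hW h₁ h₃ fun e => n₁₂ (inf_le_left.trans e.le),
    finrank_inf_of_le_of_ne d₂ d₃ hW h₂ h₃ fun e => n₁₂ (inf_le_right.trans e.le),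
    fun e => n₁₂ (e.le.trans inf_le_right), fun e => n₁₂ (e.le.trans inf_le_right),
    fun e => n₁₃ (e.le.trans inf_le_left)⟩

variable (hp : GoodTriple p)
include hp

theorem finrank_sup : finrank ℝ ↥(p.1.1 ⊔ p.2.2.1) = 3 := by
  have := finrank_sup_add_finrank_inf_eq p.1.1 p.2.2.1
  rw [p.1.2, p.2.2.2, hp.2.1] at this
  omega

theorem le_sup : p.2.1.1 ≤ p.1.1 ⊔ p.2.2.1 := by
  have hbot := inf_eq_bot_of_finrank_eq_one hp.1 hp.2.2.1 hp.2.2.2.2.1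
  have hsup := finrank_sup_add_finrank_inf_eq (p.1.1 ⊓ p.2.1.1) (p.2.1.1 ⊓ p.2.2.1)
  rw [hbot, hp.1, hp.2.2.1, finrank_bot] at hsup
  rw [← eq_of_le_of_finrank_eq (sup_le inf_le_right inf_le_left) (hsup.trans p.2.1.2.symm)]
  exact sup_le_sup inf_le_left inf_le_right

theorem inf_inf_eq_bot : p.1.1 ⊓ p.2.1.1 ⊓ p.2.2.1 = ⊥ := by
  rw [← inf_eq_bot_of_finrank_eq_one hp.1 hp.2.1 hp.2.2.2.1]
  exact le_antisymm (le_inf inf_le_left (inf_le_inf_right _ inf_le_left))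
    (le_inf inf_le_left (inf_le_right.trans inf_le_right))

end GoodTriple

namespace Triples

variable {m : ℕ}

def toFlag (x : Triples m) : Flag123 m :=
  ⟨(⟨x.1.1.1 ⊓ x.1.2.1.1, x.2.1⟩, x.1.1, ⟨x.1.1.1 ⊔ x.1.2.2.1, x.2.finrank_sup⟩),
    inf_le_left, le_sup_left⟩

def deform (t : ℝ) (x : Triples m) : Triples m :=
  ⟨(x.1.1,
    ⟨x.1.2.1.1.map (shrinkAlong ((x.1.1.1 ⊓ x.1.2.1.1)ᗮ ⊓ x.1.1.1) t : Euc m →ₗ[ℝ] Euc m),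
      (finrank_map_shrinkAlong (disjoint_orthogonal_inf_inf_left _ _)).trans x.1.2.1.2⟩,
    ⟨x.1.2.2.1.map (shrinkAlong (x.1.1.1 ⊓ x.1.2.1.1) t : Euc m →ₗ[ℝ] Euc m),
      (finrank_map_shrinkAlong (disjoint_iff.2 (by rw [inf_comm, x.2.inf_inf_eq_bot]))).trans
        x.1.2.2.2⟩),
    GoodTriple.of_le x.2.finrank_sup le_sup_left
      (map_shrinkAlong_le x.2.le_sup (inf_le_right.trans le_sup_left))
      (map_shrinkAlong_le le_sup_right (inf_le_left.trans le_sup_left))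
      (inf_map_shrinkAlong_inf_map_shrinkAlong_eq_bot x.2.inf_inf_eq_bot t)⟩

theorem deform_zero (x : Triples m) : deform 0 x = x := by
  refine Subtype.ext (Prod.ext rfl (Prod.ext (Subtype.ext ?_) (Subtype.ext ?_))) <;>
    simp [deform, shrinkAlong_zero, Module.End.one_eq_id]

theorem continuous_starProjection₁ : Continuous fun x : Triples m => x.1.1.1.starProjection :=
  Gr.continuous_starProjection.comp (continuous_fst.comp continuous_subtype_val)

theorem continuous_starProjection₂ : Continuous fun x : Triples m => x.1.2.1.1.starProjection :=
  Gr.continuous_starProjection.comp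
    (continuous_fst.comp (continuous_snd.comp continuous_subtype_val))

theorem continuous_starProjection₃ : Continuous fun x : Triples m => x.1.2.2.1.starProjection :=
  Gr.continuous_starProjection.comp
    (continuous_snd.comp (continuous_snd.comp continuous_subtype_val))

theorem continuous_starProjection_inf₁₂ :
    Continuous fun x : Triples m => (x.1.1.1 ⊓ x.1.2.1.1).starProjection :=
  continuous_starProjection_inf continuous_starProjection₁ continuous_starProjection₂
    fun x => x.2.1

theorem continuous_toFlag : Continuous (toFlag : Triples m → Flag123 m) := by
  refine Continuous.subtype_mk (.prodMk ?_ (.prodMk ?_ ?_)) _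
  · exact Gr.continuous_iff.2 continuous_starProjection_inf₁₂
  · exact continuous_fst.comp continuous_subtype_val
  · exact Gr.continuous_iff.2 (continuous_starProjection_sup continuous_starProjection₁
      continuous_starProjection₃ fun x => x.2.finrank_sup)

theorem continuous_deform :
    Continuous fun p : unitInterval × Triples m => deform p.1 p.2 := by
  have ht : Continuous fun p : unitInterval × Triples m => (p.1 : ℝ) :=
    continuous_subtype_val.comp continuous_fst
  have hP : Continuous fun p : unitInterval × Triples m =>
      (p.2.1.1.1 ⊓ p.2.1.2.1.1).starProjection :=
    continuous_starProjection_inf₁₂.comp continuous_snd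
  have hD : Continuous fun p : unitInterval × Triples m =>
      ((p.2.1.1.1 ⊓ p.2.1.2.1.1)ᗮ ⊓ p.2.1.1.1).starProjection :=
    ((continuous_starProjection₁.comp continuous_snd).sub hP).congr fun p => by
      rw [starProjection_orthogonal_inf_of_le inf_le_left]; rfl
  refine Continuous.subtype_mk (.prodMk ?_ (.prodMk ?_ ?_)) _
  · exact (continuous_fst.comp continuous_subtype_val).comp continuous_snd
  · exact Gr.continuous_iff.2 (continuous_starProjection_map
      (continuous_starProjection₂.comp continuous_snd) (hD.shrinkAlong ht)
      fun p => (p.2.deform p.1).1.2.1.2)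
  · exact Gr.continuous_iff.2 (continuous_starProjection_map
      (continuous_starProjection₃.comp continuous_snd) (hP.shrinkAlong ht)
      fun p => (p.2.deform p.1).1.2.2.2)

end Triples

namespace Flag123

variable {m : ℕ}

def toTriples (q : Flag123 m) : Triples m :=
  ⟨(q.1.2.1,
    ⟨(q.1.1.1ᗮ ⊓ q.1.2.1.1)ᗮ ⊓ q.1.2.2.1, by
      rw [finrank_orthogonal_inf_of_le (inf_le_right.trans q.2.2),
        finrank_orthogonal_inf_of_le q.2.1, q.1.1.2, q.1.2.1.2, q.1.2.2.2]⟩,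
    ⟨q.1.1.1ᗮ ⊓ q.1.2.2.1, by
      rw [finrank_orthogonal_inf_of_le (q.2.1.trans q.2.2), q.1.1.2, q.1.2.2.2]⟩),
    GoodTriple.of_le q.1.2.2.2 q.2.2 inf_le_right inf_le_right <|
      eq_bot_iff.2 fun _ ⟨⟨h₂, hperp, _⟩, h₁, _⟩ =>
        (inf_orthogonal_eq_bot (q.1.1.1ᗮ ⊓ q.1.2.1.1)).le ⟨⟨h₁, h₂⟩, hperp⟩⟩

theorem toTriples_toFlag (q : Flag123 m) : q.toTriples.toFlag = q := by
  refine Subtype.ext (Prod.ext (Subtype.ext ?_) (Prod.ext rfl (Subtype.ext ?_)))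
  · change q.1.2.1.1 ⊓ ((q.1.1.1ᗮ ⊓ q.1.2.1.1)ᗮ ⊓ q.1.2.2.1) = q.1.1.1
    rw [inf_left_comm, inf_eq_left.2 q.2.2, orthogonal_inf_orthogonal_inf_of_le q.2.1]
  · change q.1.2.1.1 ⊔ (q.1.1.1ᗮ ⊓ q.1.2.2.1) = q.1.2.2.1
    exact le_antisymm (sup_le q.2.2 inf_le_right)
      ((sup_orthogonal_inf_of_hasOrthogonalProjection q.2.2).ge.trans
        (sup_le_sup_left (inf_le_inf_right _ (orthogonal_le q.2.1)) _))

theorem continuous_toTriples : Continuous (toTriples : Flag123 m → Triples m) := by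
  have h₁ : Continuous fun q : Flag123 m => q.1.1.1.starProjection :=
    Gr.continuous_starProjection.comp (continuous_fst.comp continuous_subtype_val)
  have h₂ : Continuous fun q : Flag123 m => q.1.2.1.1.starProjection :=
    Gr.continuous_starProjection.comp
      (continuous_fst.comp (continuous_snd.comp continuous_subtype_val))
  have h₃ : Continuous fun q : Flag123 m => q.1.2.2.1.starProjection :=
    Gr.continuous_starProjection.comp
      (continuous_snd.comp (continuous_snd.comp continuous_subtype_val))
  refine Continuous.subtype_mk (.prodMk ?_ (.prodMk ?_ ?_)) _
  · exact continuous_fst.comp (continuous_snd.comp continuous_subtype_val)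
  · refine Gr.continuous_iff.2 ((h₃.sub (h₂.sub h₁)).congr fun q => ?_)
    rw [starProjection_orthogonal_inf_of_le (inf_le_right.trans q.2.2),
      starProjection_orthogonal_inf_of_le q.2.1]
    rfl
  · refine Gr.continuous_iff.2 ((h₃.sub h₁).congr fun q => ?_)
    rw [starProjection_orthogonal_inf_of_le (q.2.1.trans q.2.2)]
    rfl

end Flag123

namespace Triples

variable {m : ℕ}

theorem deform_one (x : Triples m) : x.deform 1 = x.toFlag.toTriples := by
  refine Subtype.ext (Prod.ext rfl (Prod.ext (Subtype.ext ?_) (Subtype.ext ?_)))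
  · refine map_shrinkAlong_one x.2.le_sup (inf_le_right.trans le_sup_left)
      (disjoint_orthogonal_inf_inf_left _ _) ?_
    rw [finrank_orthogonal_inf_of_le inf_le_left, x.1.1.2, x.1.2.1.2, x.2.1, x.toFlag.1.2.2.2]
  · refine map_shrinkAlong_one le_sup_right (inf_le_left.trans le_sup_left)
      (disjoint_iff.2 (by rw [inf_comm, x.2.inf_inf_eq_bot])) ?_
    rw [x.1.2.2.2, x.2.1, x.toFlag.1.2.2.2]

def homotopyEquivFlag123 (m : ℕ) : ContinuousMap.HomotopyEquiv (Triples m) (Flag123 m) where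
  toFun := ⟨toFlag, continuous_toFlag⟩
  invFun := ⟨Flag123.toTriples, Flag123.continuous_toTriples⟩
  left_inv := .symm ⟨{
    toFun := fun p => p.2.deform p.1
    continuous_toFun := continuous_deform
    map_zero_left := deform_zero
    map_one_left := deform_one }⟩
  right_inv := by
    rw [show ContinuousMap.comp _ _ = ContinuousMap.id (Flag123 m) from
      ContinuousMap.ext Flag123.toTriples_toFlag]

end Triples

theorem stmt9 : Nonempty (ContinuousMap.HomotopyEquiv (Triples 4) (Flag123 4)) :=
  ⟨Triples.homotopyEquivFlag123 4⟩

end
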